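/- arXiv:math/0702432 — 3 statements merged into one kernel-verified Lean document; each statement's English description precedes it below -/
import Mathlib

section
/- If 0 ≤ δ ≤ 1/2 and (2δ)³ + (2δ)² + 2δ > 1, then there exists a configuration C such that for every endpoint c of C there is a radius ω > 0 with λ(C|I_ω(c)) ∉ [δ, 1−δ]. -/
open MeasureTheory Set Filter

/-- The relative measure of `H` in the interval `(p - ω, p + ω)`,
i.e. `λ(H | I_ω(p)) = λ(H ∩ I_ω(p)) / (2ω)`. -/
noncomputable def relMeasure (H : Set ℝ) (p ω : ℝ) : ℝ :=
  (volume (H ∩ Ioo (p - ω) (p + ω))).toReal / (2 * ω)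

/-- A configuration: a finite increasing sequence `0 < a 0 < b 0 < a 1 < ⋯ < a (r-1) < b (r-1)`
of positive reals. -/
structure Config where
  r : ℕ
  hr : 0 < r
  a : Fin r → ℝ
  b : Fin r → ℝ
  ha : ∀ i, 0 < a i
  hab : ∀ i, a i < b i
  hba : ∀ i j : Fin r, i < j → b i < a j

/-- The set `C = (-∞,0) ∪ ⋃ i (a i, b i)` associated to a configuration. -/
def Config.carrier (C : Config) : Set ℝ := Iio 0 ∪ ⋃ i, Ioo (C.a i) (C.b i)

/-- The endpoints of a configuration: `0` together with all the `a i` and `b i`. -/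
def Config.endpoints (C : Config) : Set ℝ := insert 0 (range C.a ∪ range C.b)


private lemma term_zero {aj bj lo hi : ℝ} (h : bj ≤ lo ∨ hi ≤ aj) :
    max (min bj hi - max aj lo) 0 = 0 := by
  apply max_eq_right
  rcases h with h | h
  · have h1 : min bj hi ≤ bj := min_le_left _ _
    have h2 : lo ≤ max aj lo := le_max_right _ _
    linarith
  · have h1 : min bj hi ≤ hi := min_le_right _ _
    have h2 : aj ≤ max aj lo := le_max_left _ _
    linarith

private lemma term_full {aj bj lo hi : ℝ} (h1 : lo ≤ aj) (h2 : bj ≤ hi) (h3 : aj ≤ bj) :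
    max (min bj hi - max aj lo) 0 = bj - aj := by
  rw [min_eq_left h2, max_eq_left h1, max_eq_left (by linarith)]

private lemma term_left {aj bj lo hi : ℝ} (h1 : aj ≤ lo) (h2 : bj ≤ hi) (h3 : lo ≤ bj) :
    max (min bj hi - max aj lo) 0 = bj - lo := by
  rw [min_eq_left h2, max_eq_right h1, max_eq_left (by linarith)]

private lemma term_right {aj bj lo hi : ℝ} (h1 : lo ≤ aj) (h2 : hi ≤ bj) (h3 : aj ≤ hi) :
    max (min bj hi - max aj lo) 0 = hi - aj := by
  rw [min_eq_right h2, max_eq_left h1, max_eq_left (by linarith)]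

private lemma vol_aux (n : ℕ) (a b : Fin n → ℝ) (ha : ∀ i, 0 ≤ a i)
    (hba : ∀ i j : Fin n, i < j → b i ≤ a j) (lo hi : ℝ) :
    (volume ((Iio 0 ∪ ⋃ i, Ioo (a i) (b i)) ∩ Ioo lo hi)).toReal
      = max (min 0 hi - lo) 0 + ∑ i, max (min (b i) hi - max (a i) lo) 0 := by
  have hsea : Iio (0:ℝ) ∩ Ioo lo hi = Ioo lo (min 0 hi) := by
    ext x
    simp only [mem_inter_iff, mem_Iio, mem_Ioo, lt_min_iff]
    tauto
  have hd : Disjoint (Iio 0 ∩ Ioo lo hi) (⋃ i, Ioo (a i) (b i) ∩ Ioo lo hi) := by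
    rw [Set.disjoint_left]
    rintro x ⟨hx, -⟩ hx2
    simp only [mem_iUnion, mem_inter_iff, mem_Ioo, mem_Iio] at hx hx2
    obtain ⟨i, ⟨hai, -⟩, -⟩ := hx2
    have := ha i
    linarith
  have hpd : Pairwise (Function.onFun Disjoint fun i => Ioo (a i) (b i) ∩ Ioo lo hi) := by
    intro i j hij
    have hdis : Disjoint (Ioo (a i) (b i)) (Ioo (a j) (b j)) := by
      rcases hij.lt_or_gt with h | h
      · rw [Set.disjoint_left]
        rintro x ⟨h1, h2⟩ ⟨h3, h4⟩
        have := hba i j h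
        linarith
      · rw [Set.disjoint_left]
        rintro x ⟨h1, h2⟩ ⟨h3, h4⟩
        have := hba j i h
        linarith
    exact (hdis.mono inter_subset_left inter_subset_left)
  rw [Set.union_inter_distrib_right, Set.iUnion_inter,
    measure_union hd (MeasurableSet.iUnion fun i => (measurableSet_Ioo.inter measurableSet_Ioo)),
    measure_iUnion hpd (fun i => measurableSet_Ioo.inter measurableSet_Ioo),
    tsum_fintype, hsea]
  simp_rw [Set.Ioo_inter_Ioo, Real.volume_Ioo]
  rw [ENNReal.toReal_add ENNReal.ofReal_ne_top
    (by exact (ENNReal.sum_ne_top).mpr fun i _ => ENNReal.ofReal_ne_top)]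
  rw [ENNReal.toReal_ofReal', ENNReal.toReal_sum (fun i _ => ENNReal.ofReal_ne_top)]
  simp_rw [ENNReal.toReal_ofReal']

set_option maxHeartbeats 1000000 in
private lemma main_aux (δ g G : ℝ) (n : ℕ) (hn : 2 ≤ n)
    (hδ0 : 0 ≤ δ) (hδ2 : δ ≤ 1/2) (hG0 : 0 < G) (hGt : G < 2*δ) (hg0 : 0 < g)
    (hP2 : (n:ℝ) < 2*δ*(g + ((n:ℝ)-1)*(1+G) + 1))
    (hP5 : (1-2*δ)*(g + ((n:ℝ)-1)*(1+G) + 1) + 2*δ*g < (n:ℝ))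
    (hT2g : 2*g < g + ((n:ℝ)-1)*(1+G) + 1) :
    ∃ C : Config, ∀ c ∈ C.endpoints, ∃ ω > 0,
      relMeasure C.carrier c ω ∉ Icc δ (1 - δ) := by
  set N : ℝ := (n:ℝ) with hNdef
  set T : ℝ := g + (N-1)*(1+G) + 1 with hTdef
  have hN2 : (2:ℝ) ≤ N := by rw [hNdef]; exact_mod_cast hn
  have hG1 : G ≤ 1 := by linarith
  have hT0 : 0 < T := by nlinarith
  have hP1 : (1-2*δ)*T < N := by nlinarith
  have hTg : g < T := by nlinarith
  set A : Fin n → ℝ := fun i => g + (i.val:ℝ)*(1+G) with hAdef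
  set B : Fin n → ℝ := fun i => g + (i.val:ℝ)*(1+G) + 1 with hBdef
  have hAv : ∀ i : Fin n, A i = g + (i.val:ℝ)*(1+G) := fun i => rfl
  have hBv : ∀ i : Fin n, B i = g + (i.val:ℝ)*(1+G) + 1 := fun i => rfl
  have hA0 : ∀ i, 0 < A i := by
    intro i
    rw [hAv]
    have : (0:ℝ) ≤ (i.val:ℝ) := Nat.cast_nonneg _
    nlinarith
  have hAB : ∀ i, A i < B i := by
    intro i; rw [hAv, hBv]; linarith
  have hBA : ∀ i j : Fin n, i < j → B i < A j := by
    intro i j hij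
    have h1 : i.val < j.val := hij
    have h2 : (i.val:ℝ) + 1 ≤ (j.val:ℝ) := by exact_mod_cast h1
    rw [hAv, hBv]
    nlinarith
  have hBA' : ∀ i j : Fin n, i < j → B i ≤ A j := fun i j h => (hBA i j h).le
  have hA0' : ∀ i, 0 ≤ A i := fun i => (hA0 i).le
  have hBle : ∀ j : Fin n, B j ≤ T := by
    intro j
    have h1 : j.val < n := j.isLt
    have h2 : (j.val:ℝ) + 1 ≤ N := by
      rw [hNdef]
      exact_mod_cast h1
    rw [hBv]
    nlinarith
  have hAge : ∀ j : Fin n, g ≤ A j := by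
    intro j
    rw [hAv]
    have : (0:ℝ) ≤ (j.val:ℝ) := Nat.cast_nonneg _
    nlinarith
  refine ⟨⟨n, by omega, A, B, hA0, hAB, hBA⟩, ?_⟩
  intro c hc
  simp only [Config.endpoints, Config.carrier, mem_insert_iff, mem_union, mem_range] at hc
  have hcar : Config.carrier ⟨n, by omega, A, B, hA0, hAB, hBA⟩
      = Iio 0 ∪ ⋃ i, Ioo (A i) (B i) := rfl
  rw [hcar]
  rcases hc with rfl | ⟨i, rfl⟩ | ⟨i, rfl⟩
  · -- c = 0, ω = T
    refine ⟨T, hT0, fun hmem => ?_⟩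
    rw [Set.mem_Icc] at hmem
    have hvol : (volume ((Iio 0 ∪ ⋃ i, Ioo (A i) (B i)) ∩ Ioo (0 - T) (0 + T))).toReal
        = T + N := by
      rw [vol_aux n A B hA0' hBA']
      have hsea : max (min 0 (0 + T) - (0 - T)) 0 = T := by
        rw [min_eq_left (by linarith), max_eq_left (by linarith)]
        ring
      have hterm : ∀ j : Fin n, max (min (B j) (0 + T) - max (A j) (0 - T)) 0 = 1 := by
        intro j
        rw [term_full (by linarith [hA0 j]) (by linarith [hBle j]) (hAB j).le]
        rw [hAv, hBv]; ring
      rw [hsea, Finset.sum_congr rfl fun j _ => hterm j]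
      simp
      exact hNdef.symm
    simp only [relMeasure, hvol] at hmem
    have h2 := (div_le_iff₀ (by linarith : (0:ℝ) < 2*T)).mp hmem.2
    nlinarith
  · -- c = A i
    rcases Nat.eq_zero_or_pos i.val with h0 | hpos
    · -- bottom endpoint a_0 = g
      have hAi : A i = g := by rw [hAv, h0]; norm_num
      rw [hAi]
      refine ⟨T - g, by linarith, fun hmem => ?_⟩
      rw [Set.mem_Icc] at hmem
      have hvol : (volume ((Iio 0 ∪ ⋃ i, Ioo (A i) (B i)) ∩ Ioo (g - (T-g)) (g + (T-g)))).toReal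
          = (T - 2*g) + N := by
        rw [vol_aux n A B hA0' hBA']
        have hsea : max (min 0 (g + (T-g)) - (g - (T-g))) 0 = T - 2*g := by
          rw [min_eq_left (by linarith), max_eq_left (by linarith)]
          ring
        have hterm : ∀ j : Fin n, max (min (B j) (g + (T-g)) - max (A j) (g - (T-g))) 0 = 1 := by
          intro j
          rw [term_full (by linarith [hAge j]) (by linarith [hBle j]) (hAB j).le]
          rw [hAv, hBv]; ring
        rw [hsea, Finset.sum_congr rfl fun j _ => hterm j]
        simp
        exact hNdef.symm
      simp only [relMeasure, hvol] at hmem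
      have h2 := (div_le_iff₀ (by linarith : (0:ℝ) < 2*(T-g))).mp hmem.2
      nlinarith
    · -- interior a_i, i.val = k+1
      obtain ⟨k, hk⟩ : ∃ k, i.val = k + 1 := ⟨i.val - 1, by omega⟩
      have hkn : k < n := by have := i.isLt; omega
      have hne : (⟨k, hkn⟩ : Fin n) ≠ i := by
        intro h
        have hval : (⟨k, hkn⟩ : Fin n).val = i.val := by rw [h]
        simp only [Fin.val_mk] at hval
        omega
      have hAi : A i = g + ((k:ℝ)+1)*(1+G) := by
        rw [hAv, hk]; push_cast; ring
      have hAiprev : A ⟨k, hkn⟩ = g + (k:ℝ)*(1+G) := by rw [hAv]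
      have hBiprev : B ⟨k, hkn⟩ = g + (k:ℝ)*(1+G) + 1 := by rw [hBv]
      refine ⟨1, one_pos, fun hmem => ?_⟩
      rw [Set.mem_Icc] at hmem
      have hvol : (volume ((Iio 0 ∪ ⋃ i, Ioo (A i) (B i)) ∩ Ioo (A i - 1) (A i + 1))).toReal
          = 2 - G := by
        rw [vol_aux n A B hA0' hBA']
        have hge1 : 1 ≤ A i := by
          rw [hAi]
          have hk0 : (0:ℝ) ≤ (k:ℝ) := Nat.cast_nonneg _
          nlinarith [mul_nonneg hk0 hG0.le]
        have hsea : max (min 0 (A i + 1) - (A i - 1)) 0 = 0 := by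
          rw [min_eq_left (by linarith [hA0 i])]
          apply max_eq_right
          linarith
        have hterm : ∀ j : Fin n, max (min (B j) (A i + 1) - max (A j) (A i - 1)) 0
            = (if j = i then (1:ℝ) else 0) + (if j = (⟨k, hkn⟩ : Fin n) then 1 - G else 0) := by
          intro j
          by_cases hj : j = i
          · subst hj
            rw [if_pos rfl, if_neg (fun h => hne h.symm)]
            have hBj : B j = A j + 1 := by rw [hAv, hBv]
            rw [term_full (by linarith) (by rw [hBj]) (hAB j).le, hBj]
            ring
          · by_cases hjp : j = (⟨k, hkn⟩ : Fin n)
            · subst hjp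
              rw [if_neg hj, if_pos rfl]
              have e1 : A ⟨k, hkn⟩ ≤ A i - 1 := by
                rw [hAiprev, hAi]; nlinarith
              have e2 : B ⟨k, hkn⟩ ≤ A i + 1 := by
                rw [hBiprev, hAi]; nlinarith
              have e3 : A i - 1 ≤ B ⟨k, hkn⟩ := by
                rw [hBiprev, hAi]; nlinarith
              rw [term_left e1 e2 e3, hBiprev, hAi]
              ring
            · rw [if_neg hj, if_neg hjp, add_zero]
              apply term_zero
              have hv1 : j.val ≠ i.val := fun h => hj (Fin.ext h)
              have hv2 : j.val ≠ k := fun h => hjp (Fin.ext h)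
              
              have hcases : j.val + 2 ≤ k + 1 ∨ k + 2 ≤ j.val := by omega
              rcases hcases with h | h
              · left
                have hc : (j.val:ℝ) + 2 ≤ (k:ℝ) + 1 := by exact_mod_cast h
                rw [hBv, hAi]
                nlinarith
              · right
                have hc : (k:ℝ) + 2 ≤ (j.val:ℝ) := by exact_mod_cast h
                rw [hAi, hAv]
                nlinarith
        rw [hsea, Finset.sum_congr rfl fun j _ => hterm j, Finset.sum_add_distrib,
          Finset.sum_ite_eq', Finset.sum_ite_eq']
        simp only [Finset.mem_univ, if_true]
        ring
      simp only [relMeasure, hvol] at hmem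
      have h2 := (div_le_iff₀ (by norm_num : (0:ℝ) < 2*1)).mp hmem.2
      nlinarith
  · -- c = B i
    have hcase : i.val = n - 1 ∨ i.val + 1 < n := by have := i.isLt; omega
    rcases hcase with htop | hint
    · -- top endpoint
      have hBiT : B i = T := by
        rw [hBv, htop, hTdef, hNdef]
        rw [Nat.cast_sub (by omega : 1 ≤ n)]
        push_cast
        ring
      rw [hBiT]
      refine ⟨T, hT0, fun hmem => ?_⟩
      rw [Set.mem_Icc] at hmem
      have hvol : (volume ((Iio 0 ∪ ⋃ i, Ioo (A i) (B i)) ∩ Ioo (T - T) (T + T))).toReal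
          = N := by
        rw [vol_aux n A B hA0' hBA']
        have hsea : max (min 0 (T + T) - (T - T)) 0 = 0 := by
          rw [min_eq_left (by linarith)]
          apply max_eq_right
          linarith
        have hterm : ∀ j : Fin n, max (min (B j) (T + T) - max (A j) (T - T)) 0 = 1 := by
          intro j
          rw [term_full (by linarith [hA0 j]) (by linarith [hBle j]) (hAB j).le]
          rw [hAv, hBv]; ring
        rw [hsea, Finset.sum_congr rfl fun j _ => hterm j]
        simp
        exact hNdef.symm
      simp only [relMeasure, hvol] at hmem
      have h1 := (le_div_iff₀ (by linarith : (0:ℝ) < 2*T)).mp hmem.1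
      nlinarith
    · -- interior b_i
      have hne : (⟨i.val + 1, hint⟩ : Fin n) ≠ i := by
        intro h
        have hval : (⟨i.val + 1, hint⟩ : Fin n).val = i.val := by rw [h]
        simp only [Fin.val_mk] at hval
        omega
      have hBi : B i = A i + 1 := by rw [hAv, hBv]
      have hAnext : A ⟨i.val + 1, hint⟩ = A i + (1+G) := by
        rw [hAv, hAv]
        push_cast
        ring
      have hBnext : B ⟨i.val + 1, hint⟩ = A i + (1+G) + 1 := by
        rw [hBv, hAv]
        push_cast
        ring
      refine ⟨1, one_pos, fun hmem => ?_⟩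
      rw [Set.mem_Icc] at hmem
      have hvol : (volume ((Iio 0 ∪ ⋃ i, Ioo (A i) (B i)) ∩ Ioo (B i - 1) (B i + 1))).toReal
          = 2 - G := by
        rw [vol_aux n A B hA0' hBA']
        have hsea : max (min 0 (B i + 1) - (B i - 1)) 0 = 0 := by
          rw [min_eq_left (by linarith [hA0 i, hAB i])]
          apply max_eq_right
          have := hA0 i
          rw [hBi]
          linarith
        have hterm : ∀ j : Fin n, max (min (B j) (B i + 1) - max (A j) (B i - 1)) 0
            = (if j = i then (1:ℝ) else 0) + (if j = (⟨i.val + 1, hint⟩ : Fin n) then 1 - G else 0) := by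
          intro j
          by_cases hj : j = i
          · subst hj
            rw [if_pos rfl, if_neg (fun h => hne h.symm)]
            rw [term_full (by rw [hBi]; linarith) (by linarith) (hAB j).le, hBi]
            ring
          · by_cases hjp : j = (⟨i.val + 1, hint⟩ : Fin n)
            · subst hjp
              rw [if_neg hj, if_pos rfl]
              rw [term_right (by rw [hAnext, hBi]; linarith)
                (by rw [hBnext, hBi]; linarith)
                (by rw [hAnext, hBi]; linarith)]
              rw [hAnext, hBi]; ring
            · rw [if_neg hj, if_neg hjp, add_zero]
              apply term_zero
              have hv1 : j.val ≠ i.val := fun h => hj (Fin.ext h)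
              have hv2 : j.val ≠ i.val + 1 := fun h => hjp (Fin.ext h)
              have hcases : j.val + 1 ≤ i.val ∨ i.val + 2 ≤ j.val := by omega
              rcases hcases with h | h
              · left
                have hc : (j.val:ℝ) + 1 ≤ (i.val:ℝ) := by exact_mod_cast h
                rw [hBv, hBv]
                nlinarith
              · right
                have hc : (i.val:ℝ) + 2 ≤ (j.val:ℝ) := by exact_mod_cast h
                rw [hAv, hBv]
                nlinarith
        rw [hsea, Finset.sum_congr rfl fun j _ => hterm j, Finset.sum_add_distrib,
          Finset.sum_ite_eq', Finset.sum_ite_eq']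
        simp only [Finset.mem_univ, if_true]
        ring
      simp only [relMeasure, hvol] at hmem
      have h2 := (div_le_iff₀ (by norm_num : (0:ℝ) < 2*1)).mp hmem.2
      nlinarith

set_option maxHeartbeats 1000000

/-- If `0 ≤ δ ≤ 1/2` and `(2δ)³ + (2δ)² + 2δ > 1`, then there is a configuration `C` such that
for every endpoint `c` of `C` there is a radius `ω > 0` with `λ(C | I_ω(c)) ∉ [δ, 1-δ]`. -/
theorem exists_counterexample_config (δ : ℝ) (hδ0 : 0 ≤ δ) (hδ1 : δ ≤ 1 / 2)
    (hcubic : (2 * δ) ^ 3 + (2 * δ) ^ 2 + 2 * δ > 1) :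
    ∃ C : Config, ∀ c ∈ C.endpoints, ∃ ω > 0,
      relMeasure C.carrier c ω ∉ Icc δ (1 - δ) := by
  obtain ⟨t, htdef⟩ : ∃ t : ℝ, t = 2*δ := ⟨_, rfl⟩
  have hcub : t^3 + t^2 + t > 1 := by rw [htdef]; exact hcubic
  have ht00 : 0 ≤ t := by rw [htdef]; linarith
  have ht1 : t ≤ 1 := by rw [htdef]; linarith
  have hthalf : 1/2 < t := by
    by_contra h
    push_neg at h
    nlinarith [mul_nonneg ht00 ht00, mul_nonneg (mul_nonneg ht00 ht00) ht00,
      sq_nonneg (t - 1/2), sq_nonneg t]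
  have ht0 : 0 < t := by linarith
  obtain ⟨E, hEdef⟩ : ∃ E : ℝ, E = t^3 + t^2 + t - 1 := ⟨_, rfl⟩
  have hE : 0 < E := by rw [hEdef]; linarith
  obtain ⟨n, hndef⟩ : ∃ n : ℕ, n = ⌈t^3 / E⌉₊ + 2 := ⟨_, rfl⟩
  have hn2 : 2 ≤ n := by omega
  have hNr : ((n:ℕ):ℝ) = (⌈t^3/E⌉₊ : ℝ) + 2 := by rw [hndef]; push_cast; ring
  have hceil : t^3/E ≤ (⌈t^3/E⌉₊:ℝ) := Nat.le_ceil _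
  have hNE : t^3 < (n:ℝ) * E := by
    have h1 : t^3/E < (n:ℝ) := by rw [hNr]; linarith
    calc t^3 = (t^3/E)*E := by field_simp
    _ < (n:ℝ)*E := by exact mul_lt_mul_of_pos_right h1 hE
  have hNE' : t^3 < (n:ℝ)*(t^3 + t^2 + t - 1) := by rw [hEdef] at hNE; exact hNE
  have hN2 : (2:ℝ) ≤ (n:ℝ) := by exact_mod_cast hn2
  have hN1 : (1:ℝ) ≤ (n:ℝ) - 1 := by linarith
  have hden : 0 < ((n:ℝ)-1)*t^2 := by
    apply mul_pos (by linarith)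
    positivity
  obtain ⟨Gm, hGmdef⟩ : ∃ Gm : ℝ, Gm = (n:ℝ)*(1-t-t^2)/(((n:ℝ)-1)*t^2) := ⟨_, rfl⟩
  have hGmt : Gm < t := by
    rw [hGmdef, div_lt_iff₀ hden]
    nlinarith [hNE']
  obtain ⟨G, hGdef⟩ : ∃ G : ℝ, G = max ((t + Gm)/2) (t/2) := ⟨_, rfl⟩
  have hG0 : 0 < G := by
    rw [hGdef]
    exact lt_of_lt_of_le (by linarith) (le_max_right _ _)
  have hGt : G < t := by
    rw [hGdef]
    exact max_lt (by linarith) (by linarith)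
  have hGkey : (n:ℝ)*(1-t-t^2) < ((n:ℝ)-1)*G*t^2 := by
    have h1 : (t+Gm)/2 ≤ G := by rw [hGdef]; exact le_max_left _ _
    have h2 : ((n:ℝ)-1)*t^2*Gm = (n:ℝ)*(1-t-t^2) := by
      rw [hGmdef]
      field_simp
    nlinarith [mul_le_mul_of_nonneg_left h1 hden.le, hNE']
  obtain ⟨L0, hL0def⟩ : ∃ L0 : ℝ, L0 = (n:ℝ)*(1-t)/t - ((n:ℝ)-1)*G := ⟨_, rfl⟩
  obtain ⟨U0, hU0def⟩ : ∃ U0 : ℝ, U0 = (n:ℝ)*t - ((n:ℝ)-1)*(1-t)*G := ⟨_, rfl⟩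
  have hLU : L0 < U0 := by
    have h3 : (n:ℝ)*(1-t)/t < (n:ℝ)*t - ((n:ℝ)-1)*(1-t)*G + ((n:ℝ)-1)*G := by
      rw [div_lt_iff₀ ht0]
      nlinarith [hGkey]
    rw [hL0def, hU0def]
    linarith
  have hU0pos : 0 < U0 := by
    rw [hU0def]
    nlinarith [mul_pos (show (0:ℝ) < (n:ℝ)-1 by linarith) hG0,
      mul_nonneg (mul_nonneg (show (0:ℝ) ≤ (n:ℝ)-1 by linarith) (show (0:ℝ) ≤ 1-t by linarith)) hG0.le,
      mul_pos (show (0:ℝ) < (n:ℝ)-1 by linarith) (show (0:ℝ) < t - G by linarith)]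
  obtain ⟨g, hgdef⟩ : ∃ g : ℝ, g = (max L0 0 + U0)/2 := ⟨_, rfl⟩
  have hg0 : 0 < g := by
    rw [hgdef]
    have := le_max_right L0 0
    linarith
  have hgL : L0 < g := by
    rw [hgdef]
    have := le_max_left L0 0
    linarith
  have hgU : g < U0 := by
    rw [hgdef]
    have h1 : max L0 0 < U0 := max_lt hLU hU0pos
    linarith
  have hP2 : (n:ℝ) < t*(g + ((n:ℝ)-1)*(1+G) + 1) := by
    have h1 : t*L0 = (n:ℝ)*(1-t) - ((n:ℝ)-1)*G*t := by
      rw [hL0def]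
      field_simp
    have h2 : t*L0 < t*g := mul_lt_mul_of_pos_left hgL ht0
    have h3 : t*g > (n:ℝ)*(1-t) - ((n:ℝ)-1)*G*t := by linarith
    nlinarith [h3]
  have hP5 : (1-t)*(g + ((n:ℝ)-1)*(1+G) + 1) + t*g < (n:ℝ) := by
    rw [hU0def] at hgU
    nlinarith [hgU]
  have hT2g : 2*g < g + ((n:ℝ)-1)*(1+G) + 1 := by
    rw [hU0def] at hgU
    have h1 : ((n:ℝ)-1)*(1-t)*G ≥ 0 :=
      mul_nonneg (mul_nonneg (by linarith) (by linarith)) hG0.le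
    have h2 : ((n:ℝ)-1)*G ≥ 0 := mul_nonneg (by linarith) hG0.le
    nlinarith [hgU]
  rw [htdef] at hGt hP2 hP5
  exact main_aux δ g G n hn2 hδ0 hδ1 hG0 hGt hg0 hP2 hP5 hT2g
end

section
/- If p is a black endpoint of C with p ≤ 1/2, then either ω(p) < p or ω(p) ≥ 1−p. Symmetrically, if p is a white endpoint of C with p ≥ 1/2, then either ω(p) < 1−p or ω(p) ≥ p. -/
open MeasureTheory Set Filter

/-- `C` is a counterexample to `K(δ)`: every endpoint `c` of `C` admits a radius `ω > 0`
with `λ(C | I_ω(c)) ∉ [δ, 1-δ]`. -/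
def IsCounterexample (δ : ℝ) (C : Config) : Prop :=
  ∀ c ∈ C.endpoints, ∃ ω > 0, relMeasure C.carrier c ω ∉ Icc δ (1 - δ)

/-- `ω(p) = sup {ω ≥ 0 : λ(C | I_ω(p)) ∉ (δ, 1-δ)}`. -/
noncomputable def omegaMax (C : Config) (δ p : ℝ) : ℝ :=
  sSup {ω : ℝ | 0 ≤ ω ∧ relMeasure C.carrier p ω ∉ Ioo δ (1 - δ)}

/-- An endpoint `p` is black if `λ(C | I_{ω(p)}(p)) ≥ 1 - δ`. -/
def IsBlack (C : Config) (δ p : ℝ) : Prop :=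
  p ∈ C.endpoints ∧ 1 - δ ≤ relMeasure C.carrier p (omegaMax C δ p)

/-- An endpoint `p` is white if `λ(C | I_{ω(p)}(p)) ≤ δ`. -/
def IsWhite (C : Config) (δ p : ℝ) : Prop :=
  p ∈ C.endpoints ∧ relMeasure C.carrier p (omegaMax C δ p) ≤ δ


/-- helper: measure of H inside (x,y), as a real number -/
noncomputable def mI (H : Set ℝ) (x y : ℝ) : ℝ := (volume (H ∩ Ioo x y)).toReal

lemma relMeasure_eq (H : Set ℝ) (p ω : ℝ) : relMeasure H p ω = mI H (p-ω) (p+ω) / (2*ω) := rfl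

lemma vol_inter_Ioo_ne_top (H : Set ℝ) (x y : ℝ) : volume (H ∩ Ioo x y) ≠ ⊤ := by
  refine ne_top_of_le_ne_top ?_ (measure_mono inter_subset_right)
  simp [Real.volume_Ioo]

lemma mI_nonneg (H : Set ℝ) (x y : ℝ) : 0 ≤ mI H x y := ENNReal.toReal_nonneg

lemma mI_le_length (H : Set ℝ) {x y : ℝ} (h : x ≤ y) : mI H x y ≤ y - x := by
  have := measure_mono (μ := volume) (inter_subset_right (s := H) (t := Ioo x y))
  rw [Real.volume_Ioo] at this
  calc mI H x y ≤ (ENNReal.ofReal (y-x)).toReal :=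
        ENNReal.toReal_mono (by simp) this
    _ ≤ y - x := by rw [ENNReal.toReal_ofReal (by linarith)]

lemma mI_mono' (H H' : Set ℝ) {x y x' y' : ℝ} (h : H ∩ Ioo x y ⊆ H' ∩ Ioo x' y') :
    mI H x y ≤ mI H' x' y' :=
  ENNReal.toReal_mono (vol_inter_Ioo_ne_top _ _ _) (measure_mono h)

lemma mI_mono (H H' : Set ℝ) {x y : ℝ} (h : H ∩ Ioo x y ⊆ H' ∩ Ioo x y) :
    mI H x y ≤ mI H' x y :=
  ENNReal.toReal_mono (vol_inter_Ioo_ne_top _ _ _) (measure_mono h)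

lemma mI_subset (H H' : Set ℝ) {x y : ℝ} (h : H ⊆ H') : mI H x y ≤ mI H' x y :=
  mI_mono _ _ (inter_subset_inter_left _ h)

lemma mI_congr {H H' : Set ℝ} {x y : ℝ} (h : H ∩ Ioo x y = H' ∩ Ioo x y) :
    mI H x y = mI H' x y := by unfold mI; rw [h]

lemma mI_of_empty {H : Set ℝ} {x y : ℝ} (h : H ∩ Ioo x y = ∅) : mI H x y = 0 := by
  unfold mI; rw [h]; simp

lemma mI_of_full {H : Set ℝ} {x y : ℝ} (hxy : x ≤ y) (h : Ioo x y ⊆ H) : mI H x y = y - x := by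
  unfold mI
  rw [inter_eq_self_of_subset_right h, Real.volume_Ioo, ENNReal.toReal_ofReal (by linarith)]

/-- upper split: mI over (x,z) at point u -/
lemma mI_split_le (H : Set ℝ) {x u z : ℝ} (h1 : x ≤ u) (h2 : u ≤ z) :
    mI H x z ≤ mI H x u + mI H u z := by
  unfold mI
  have hsub : H ∩ Ioo x z ⊆ (H ∩ Ioo x u) ∪ (H ∩ {u}) ∪ (H ∩ Ioo u z) := by
    rintro t ⟨htH, ht1, ht2⟩
    rcases lt_trichotomy t u with h | h | h
    · exact Or.inl (Or.inl ⟨htH, ht1, h⟩)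
    · exact Or.inl (Or.inr ⟨htH, by simp [h]⟩)
    · exact Or.inr ⟨htH, h, ht2⟩
  have hu : volume (H ∩ {u}) = 0 :=
    measure_mono_null inter_subset_right (by simp)
  have hle : volume (H ∩ Ioo x z) ≤ volume (H ∩ Ioo x u) + volume (H ∩ Ioo u z) := by
    calc volume (H ∩ Ioo x z) ≤ volume ((H ∩ Ioo x u) ∪ (H ∩ {u}) ∪ (H ∩ Ioo u z)) :=
          measure_mono hsub
      _ ≤ volume ((H ∩ Ioo x u) ∪ (H ∩ {u})) + volume (H ∩ Ioo u z) := measure_union_le _ _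
      _ ≤ (volume (H ∩ Ioo x u) + volume (H ∩ {u})) + volume (H ∩ Ioo u z) :=
          add_le_add_left (measure_union_le _ _) _
      _ = volume (H ∩ Ioo x u) + volume (H ∩ Ioo u z) := by rw [hu, add_zero]
  have := ENNReal.toReal_mono (ENNReal.add_ne_top.mpr
    ⟨vol_inter_Ioo_ne_top _ _ _, vol_inter_Ioo_ne_top _ _ _⟩) hle
  rwa [ENNReal.toReal_add (vol_inter_Ioo_ne_top _ _ _) (vol_inter_Ioo_ne_top _ _ _)] at this

/-- lower split (2 pieces), needs measurability -/
lemma mI_split_ge (H : Set ℝ) (hH : MeasurableSet H) {x u z : ℝ} (h1 : x ≤ u) (h2 : u ≤ z) :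
    mI H x u + mI H u z ≤ mI H x z := by
  unfold mI
  rw [← ENNReal.toReal_add (vol_inter_Ioo_ne_top _ _ _) (vol_inter_Ioo_ne_top _ _ _)]
  apply ENNReal.toReal_mono (vol_inter_Ioo_ne_top _ _ _)
  rw [← measure_union (by
      apply Set.disjoint_left.mpr
      rintro t ⟨_, _, htu⟩ ⟨_, hut, _⟩
      exact absurd hut (not_lt.mpr htu.le)) (hH.inter measurableSet_Ioo)]
  apply measure_mono
  rintro t (⟨htH, h3, h4⟩ | ⟨htH, h3, h4⟩) <;> exact ⟨htH, by linarith, by linarith⟩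

/-- lower split (3 pieces) -/
lemma mI_split3_ge (H : Set ℝ) (hH : MeasurableSet H) {x u v z : ℝ}
    (h1 : x ≤ u) (h2 : u ≤ v) (h3 : v ≤ z) :
    mI H x u + mI H u v + mI H v z ≤ mI H x z := by
  have := mI_split_ge H hH h1 h2
  have h2' := mI_split_ge H hH (h1.trans h2) h3
  linarith



namespace Config

variable (C : Config)

lemma a_mono : ∀ {i j : Fin C.r}, i ≤ j → C.a i ≤ C.a j := by
  intro i j hij
  rcases eq_or_lt_of_le hij with h | h
  · rw [h]
  · exact le_of_lt ((C.hab i).trans (C.hba i j h))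

lemma b_mono : ∀ {i j : Fin C.r}, i ≤ j → C.b i ≤ C.b j := by
  intro i j hij
  rcases eq_or_lt_of_le hij with h | h
  · rw [h]
  · exact le_of_lt ((C.hba i j h).trans (C.hab j))

lemma a_lt_of_lt {i j : Fin C.r} (h : i < j) : C.a i < C.a j := (C.hab i).trans (C.hba i j h)

lemma carrier_measurable : MeasurableSet C.carrier :=
  (measurableSet_Iio).union (MeasurableSet.iUnion (fun i => measurableSet_Ioo))

lemma Iio_subset : Iio (0:ℝ) ⊆ C.carrier := subset_union_left

lemma Ioo_subset (i : Fin C.r) : Ioo (C.a i) (C.b i) ⊆ C.carrier :=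
  (subset_iUnion (fun i => Ioo (C.a i) (C.b i)) i).trans subset_union_right

lemma mem_carrier {x : ℝ} : x ∈ C.carrier ↔ x < 0 ∨ ∃ i, C.a i < x ∧ x < C.b i := by
  simp [Config.carrier, Set.mem_iUnion, Set.mem_Ioo]

end Config

section Facts

variable {δ : ℝ} (hδ1 : 1/4 < δ) (hδ2 : δ < 1/2)
variable {C : Config} (hlast : IsGreatest (range C.b) 1)

include hlast in
lemma b_le_one (i : Fin C.r) : C.b i ≤ 1 := hlast.2 ⟨i, rfl⟩

include hlast in
lemma a_lt_one (i : Fin C.r) : C.a i < 1 := lt_of_lt_of_le (C.hab i) (b_le_one hlast i)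

include hlast in
lemma endpoint_mem_Icc {p : ℝ} (hp : p ∈ C.endpoints) : 0 ≤ p ∧ p ≤ 1 := by
  rcases hp with rfl | (⟨i, rfl⟩ | ⟨i, rfl⟩)
  · exact ⟨le_refl _, zero_le_one⟩
  · exact ⟨(C.ha i).le, (a_lt_one hlast i).le⟩
  · exact ⟨((C.ha i).trans (C.hab i)).le, b_le_one hlast i⟩

include hlast in
/-- carrier mass strictly right of 0 is at most 1 -/
lemma mI_carrier_pos_le_one {x y : ℝ} (hx : 0 ≤ x) : mI C.carrier x y ≤ 1 := by
  have hsub : C.carrier ∩ Ioo x y ⊆ Ioc 0 1 := by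
    rintro t ⟨htC, ht1, ht2⟩
    rcases (C.mem_carrier).mp htC with h | ⟨i, h1, h2⟩
    · linarith
    · exact ⟨lt_of_le_of_lt (C.ha i).le h1, le_of_lt (lt_of_lt_of_le h2 (b_le_one hlast i))⟩
  have := measure_mono (μ := volume) hsub
  rw [Real.volume_Ioc] at this
  calc mI C.carrier x y ≤ (ENNReal.ofReal (1-0:ℝ)).toReal := ENNReal.toReal_mono (by simp) this
    _ ≤ 1 := by rw [ENNReal.toReal_ofReal (by norm_num)]; norm_num

/-- the defining set for omegaMax -/
def OSet (C : Config) (δ p : ℝ) : Set ℝ :=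
  {ω : ℝ | 0 ≤ ω ∧ relMeasure C.carrier p ω ∉ Ioo δ (1 - δ)}

lemma omegaMax_eq_sSup (C : Config) (δ p : ℝ) : omegaMax C δ p = sSup (OSet C δ p) := rfl

include hδ1 in
lemma zero_mem_OSet (p : ℝ) : 0 ∈ OSet C δ p := by
  refine ⟨le_refl _, ?_⟩
  have : relMeasure C.carrier p 0 = 0 := by
    rw [relMeasure_eq, mI]
    simp
  rw [this]
  rintro ⟨h, -⟩
  linarith

include hδ1 hδ2 hlast in
lemma OSet_bddAbove {p : ℝ} (hp : p ∈ C.endpoints) : BddAbove (OSet C δ p) := by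
  obtain ⟨hp0, hp1⟩ := endpoint_mem_Icc hlast hp
  refine ⟨4/(1-2*δ), fun ω hω => ?_⟩
  by_contra hR
  push_neg at hR
  have h12 : (0:ℝ) < 1 - 2*δ := by linarith
  have hω4 : 4 < (1-2*δ) * ω := by
    rw [div_lt_iff₀ h12] at hR; linarith [hR]
  have hω0 : (0:ℝ) < ω := by nlinarith
  have hωp : p < ω := by nlinarith
  apply hω.2
  have hlow : ω - p ≤ mI C.carrier (p-ω) (p+ω) := by
    rw [show ω - p = 0 - (p-ω) by ring]
    rw [← mI_of_full (H := Iio (0:ℝ)) (by linarith) (fun t ht => ht.2)]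
    apply mI_mono'
    rintro t ⟨ht, ht1, ht2⟩
    exact ⟨C.Iio_subset ht, by constructor <;> [linarith; linarith]⟩
  have hup : mI C.carrier (p-ω) (p+ω) ≤ (ω - p) + 1 := by
    calc mI C.carrier (p-ω) (p+ω) ≤ mI C.carrier (p-ω) 0 + mI C.carrier 0 (p+ω) :=
          mI_split_le _ (by linarith) (by linarith)
      _ ≤ (0 - (p-ω)) + 1 :=
          add_le_add (mI_le_length _ (by linarith)) (mI_carrier_pos_le_one hlast (le_refl _))
      _ = (ω - p) + 1 := by ring
  constructor
  · rw [relMeasure_eq, lt_div_iff₀ (by linarith)]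
    nlinarith
  · rw [relMeasure_eq, div_lt_iff₀ (by linarith)]
    nlinarith

include hδ1 hδ2 hlast in
lemma omegaMax_nonneg {p : ℝ} (hp : p ∈ C.endpoints) : 0 ≤ omegaMax C δ p :=
  le_csSup (OSet_bddAbove hδ1 hδ2 hlast hp) (zero_mem_OSet hδ1 p)

include hδ1 hδ2 hlast in
lemma omegaMax_pos (hctr : IsCounterexample δ C) {p : ℝ} (hp : p ∈ C.endpoints) :
    0 < omegaMax C δ p := by
  obtain ⟨τ, hτ0, hτ⟩ := hctr p hp
  have hmem : τ ∈ OSet C δ p := ⟨hτ0.le, fun h => hτ ⟨h.1.le, h.2.le⟩⟩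
  exact lt_of_lt_of_le hτ0 (le_csSup (OSet_bddAbove hδ1 hδ2 hlast hp) hmem)

include hδ1 hδ2 hlast in
/-- for radii above omegaMax, the density is strictly inside (δ, 1-δ) -/
lemma density_of_gt_omegaMax {p : ℝ} (hp : p ∈ C.endpoints) {t : ℝ}
    (ht : omegaMax C δ p < t) : δ < relMeasure C.carrier p t ∧ relMeasure C.carrier p t < 1 - δ := by
  have htn : t ∉ OSet C δ p := fun hmem =>
    absurd (le_csSup (OSet_bddAbove hδ1 hδ2 hlast hp) hmem) (not_le.mpr ht)
  have ht0 : 0 ≤ t := (omegaMax_nonneg hδ1 hδ2 hlast hp).trans ht.le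
  by_contra hcon
  exact htn ⟨ht0, fun hin => hcon ⟨hin.1, hin.2⟩⟩

end Facts


/-- the truncated configuration consisting of the first `n` intervals -/
def Config.take (C : Config) (n : ℕ) (hn : 0 < n) (h : n ≤ C.r) : Config :=
  ⟨n, hn, fun j => C.a ⟨j.val, lt_of_lt_of_le j.isLt h⟩,
   fun j => C.b ⟨j.val, lt_of_lt_of_le j.isLt h⟩,
   fun j => C.ha _, fun j => C.hab _,
   fun i j hij => C.hba _ _ (by exact Fin.mk_lt_mk.mpr hij)⟩

lemma Config.take_r (C : Config) (n : ℕ) (hn : 0 < n) (h : n ≤ C.r) :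
    (C.take n hn h).r = n := rfl

lemma Config.mem_take_carrier (C : Config) (n : ℕ) (hn : 0 < n) (h : n ≤ C.r) {x : ℝ} :
    x ∈ (C.take n hn h).carrier ↔ x < 0 ∨ ∃ i : Fin C.r, i.val < n ∧ C.a i < x ∧ x < C.b i := by
  rw [Config.mem_carrier]
  constructor
  · rintro (hx | ⟨j, hj1, hj2⟩)
    · exact Or.inl hx
    · exact Or.inr ⟨⟨j.val, lt_of_lt_of_le j.isLt h⟩, j.isLt, hj1, hj2⟩
  · rintro (hx | ⟨i, hin, hi1, hi2⟩)
    · exact Or.inl hx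
    · exact Or.inr ⟨⟨i.val, hin⟩, hi1, hi2⟩

lemma Config.take_endpoints (C : Config) (n : ℕ) (hn : 0 < n) (h : n ≤ C.r) {c : ℝ} :
    c ∈ (C.take n hn h).endpoints →
      c = 0 ∨ ∃ i : Fin C.r, i.val < n ∧ (c = C.a i ∨ c = C.b i) := by
  rintro (rfl | (⟨j, rfl⟩ | ⟨j, rfl⟩))
  · exact Or.inl rfl
  · exact Or.inr ⟨⟨j.val, lt_of_lt_of_le j.isLt h⟩, j.isLt, Or.inl rfl⟩
  · exact Or.inr ⟨⟨j.val, lt_of_lt_of_le j.isLt h⟩, j.isLt, Or.inr rfl⟩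

lemma Config.take_carrier_subset (C : Config) (n : ℕ) (hn : 0 < n) (h : n ≤ C.r) :
    (C.take n hn h).carrier ⊆ C.carrier := by
  intro x hx
  rcases (C.mem_take_carrier n hn h).mp hx with h' | ⟨i, _, hi1, hi2⟩
  · exact C.Iio_subset h'
  · exact C.Ioo_subset i ⟨hi1, hi2⟩

/-- reflection x ↦ 1 - x preserves volume -/
lemma refl_measurePreserving : MeasurePreserving (fun x : ℝ => 1 - x) volume volume := by
  have h := (measurePreserving_add_left (volume : Measure ℝ) 1).comp
    (Measure.measurePreserving_neg (volume : Measure ℝ))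
  have : (fun x : ℝ => 1 - x) = (fun x : ℝ => 1 + x) ∘ Neg.neg := by
    funext x; simp [sub_eq_add_neg]
  rw [this]
  exact h

lemma refl_vol (S : Set ℝ) (hS : MeasurableSet S) (α β : ℝ) :
    volume ({x : ℝ | 1 - x ∈ S} ∩ Ioo α β) = volume (S ∩ Ioo (1-β) (1-α)) := by
  have hpre : (fun x : ℝ => 1 - x) ⁻¹' (S ∩ Ioo (1-β) (1-α)) = {x : ℝ | 1 - x ∈ S} ∩ Ioo α β := by
    ext x
    simp only [mem_preimage, mem_inter_iff, mem_Ioo, mem_setOf_eq]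
    constructor
    · rintro ⟨h1, h2, h3⟩; exact ⟨h1, by linarith, by linarith⟩
    · rintro ⟨h1, h2, h3⟩; exact ⟨h1, by linarith, by linarith⟩
  rw [← hpre]
  exact refl_measurePreserving.measure_preimage
    ((hS.inter measurableSet_Ioo).nullMeasurableSet)

lemma refl_mI (S : Set ℝ) (hS : MeasurableSet S) (α β : ℝ) :
    mI {x : ℝ | 1 - x ∈ S} α β = mI S (1-β) (1-α) := by
  unfold mI; rw [refl_vol S hS]

namespace Config

variable (C : Config)

lemma carrier_lt_one (hb1 : ∀ i, C.b i ≤ 1) {x : ℝ} (hx : x ∈ C.carrier) : x < 1 := by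
  rcases C.mem_carrier.mp hx with h | ⟨i, hi1, hi2⟩
  · linarith
  · exact lt_of_lt_of_le hi2 (hb1 i)

def idxA {k : ℕ} (hk : k + 1 < C.r) (j : Fin (C.r - 1 - k)) : Fin C.r :=
  ⟨C.r - 1 - j.val, by have := j.isLt; omega⟩

def idxB {k : ℕ} (hk : k + 1 < C.r) (j : Fin (C.r - 1 - k)) : Fin C.r :=
  ⟨C.r - 2 - j.val, by have := j.isLt; omega⟩

lemma idxA_val {k : ℕ} (hk : k + 1 < C.r) (j : Fin (C.r - 1 - k)) :
    (C.idxA hk j).val = C.r - 1 - j.val := rfl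

lemma idxB_val {k : ℕ} (hk : k + 1 < C.r) (j : Fin (C.r - 1 - k)) :
    (C.idxB hk j).val = C.r - 2 - j.val := rfl

lemma idxA_gt {k : ℕ} (hk : k + 1 < C.r) (j : Fin (C.r - 1 - k)) : k < (C.idxA hk j).val := by
  have := j.isLt; rw [C.idxA_val hk j]; omega

lemma idxB_ge {k : ℕ} (hk : k + 1 < C.r) (j : Fin (C.r - 1 - k)) : k ≤ (C.idxB hk j).val := by
  have := j.isLt; rw [C.idxB_val hk j]; omega

lemma idxB_succ {k : ℕ} (hk : k + 1 < C.r) (j : Fin (C.r - 1 - k)) :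
    (C.idxB hk j).val + 1 = (C.idxA hk j).val := by
  have := j.isLt; rw [C.idxA_val hk j, C.idxB_val hk j]; omega

/-- reflected-complement configuration built from the gaps above interval k -/
def reflTail (hb1 : ∀ i, C.b i ≤ 1) {k : ℕ} (hk : k + 1 < C.r) : Config where
  r := C.r - 1 - k
  hr := by omega
  a := fun j => 1 - C.a (C.idxA hk j)
  b := fun j => 1 - C.b (C.idxB hk j)
  ha := fun j => by
    show (0:ℝ) < 1 - C.a (C.idxA hk j)
    have h1 := C.hab (C.idxA hk j)
    have h2 := hb1 (C.idxA hk j)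
    linarith
  hab := fun j => by
    show 1 - C.a (C.idxA hk j) < 1 - C.b (C.idxB hk j)
    have h : C.b (C.idxB hk j) < C.a (C.idxA hk j) :=
      C.hba _ _ (by rw [Fin.lt_def, C.idxA_val hk j, C.idxB_val hk j]; have := j.isLt; omega)
    linarith
  hba := fun i j hij => by
    show 1 - C.b (C.idxB hk i) < 1 - C.a (C.idxA hk j)
    have hval : (i:ℕ) < (j:ℕ) := hij
    have hle : C.idxA hk j ≤ C.idxB hk i := by
      rw [Fin.le_def, C.idxA_val hk j, C.idxB_val hk i]
      have := j.isLt; omega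
    have h1 : C.a (C.idxA hk j) ≤ C.a (C.idxB hk i) := C.a_mono hle
    have h2 := C.hab (C.idxB hk i)
    linarith

lemma reflTail_r (hb1 : ∀ i, C.b i ≤ 1) {k : ℕ} (hk : k + 1 < C.r) :
    (C.reflTail hb1 hk).r = C.r - 1 - k := rfl

lemma reflTail_a (hb1 : ∀ i, C.b i ≤ 1) {k : ℕ} (hk : k + 1 < C.r) (j) :
    (C.reflTail hb1 hk).a j = 1 - C.a (C.idxA hk j) := rfl

lemma reflTail_b (hb1 : ∀ i, C.b i ≤ 1) {k : ℕ} (hk : k + 1 < C.r) (j) :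
    (C.reflTail hb1 hk).b j = 1 - C.b (C.idxB hk j) := rfl

/-- the reflected tail is disjoint from the reflected carrier -/
lemma reflTail_disjoint (hb1 : ∀ i, C.b i ≤ 1) {k : ℕ} (hk : k + 1 < C.r) :
    (C.reflTail hb1 hk).carrier ∩ {x : ℝ | 1 - x ∈ C.carrier} = ∅ := by
  rw [eq_empty_iff_forall_notMem]
  rintro x ⟨hxD, hxC⟩
  rcases (C.reflTail hb1 hk).mem_carrier.mp hxD with h | ⟨j, hj1, hj2⟩
  · have h1x : (1:ℝ) - x < 1 := C.carrier_lt_one hb1 hxC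
    have hx0 : x < 0 := h
    linarith
  · rw [C.reflTail_a hb1 hk j] at hj1
    rw [C.reflTail_b hb1 hk j] at hj2
    -- 1 - x lies in the gap (b (idxB j), a (idxA j))
    have hw1 : C.b (C.idxB hk j) < 1 - x := by linarith
    have hw2 : 1 - x < C.a (C.idxA hk j) := by linarith
    rcases C.mem_carrier.mp hxC with h | ⟨l, hl1, hl2⟩
    · have hpos := (C.ha (C.idxB hk j)).trans (C.hab (C.idxB hk j))
      have hneg : (1:ℝ) - x < 0 := h
      linarith
    · rcases le_or_gt l.val (C.idxB hk j).val with hcase | hcase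
      · have : C.b l ≤ C.b (C.idxB hk j) := C.b_mono (by rw [Fin.le_def]; exact hcase)
        linarith
      · have hge : C.idxA hk j ≤ l := by
          rw [Fin.le_def]
          have := C.idxB_succ hk j
          omega
        have : C.a (C.idxA hk j) ≤ C.a l := C.a_mono hge
        linarith

end Config

section Black

variable {δ : ℝ} (hδ1 : 1/4 < δ) (hδ2 : δ < 1/2)
variable {C : Config} (hlast : IsGreatest (range C.b) 1)
variable (hctr : IsCounterexample δ C)
variable (hmin : ∀ C' : Config, C'.r < C.r → ¬ IsCounterexample δ C')

include hδ1 hδ2 hlast hctr hmin in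
set_option maxHeartbeats 2000000 in
theorem black_case {p : ℝ} (hB : IsBlack C δ p)
    (h1 : p ≤ omegaMax C δ p) (h2 : omegaMax C δ p < 1 - p) : False := by
  have hδ0 : (0:ℝ) < δ := by linarith
  have hp := hB.1
  obtain ⟨hp0, hp1⟩ := endpoint_mem_Icc hlast hp
  set ω := omegaMax C δ p with hωdef
  have hω0 : 0 < ω := omegaMax_pos hδ1 hδ2 hlast hctr hp
  set q := p + ω with hqdef
  have hq1 : q < 1 := by rw [hqdef]; linarith
  have hq0 : 0 < q := by rw [hqdef]; linarith
  have hpω0 : p - ω ≤ 0 := by linarith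
  -- black mass bound
  have hblackvol : (1-δ)*(2*ω) ≤ mI C.carrier (p-ω) q := by
    have := hB.2
    rw [relMeasure_eq, le_div_iff₀ (by linarith)] at this
    exact this
  -- sparsity above q
  have sparsity : ∀ t : ℝ, 0 < t → mI C.carrier q (q+t) ≤ (1-2*δ)*t := by
    intro t ht
    have hdens := (density_of_gt_omegaMax hδ1 hδ2 hlast hp
      (show ω < ω + t by linarith)).2
    rw [relMeasure_eq, div_lt_iff₀ (by linarith)] at hdens
    have hsplit := mI_split3_ge C.carrier C.carrier_measurable
      (x := p-(ω+t)) (u := p-ω) (v := q) (z := p+(ω+t))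
      (by linarith) (by linarith) (by rw [hqdef]; linarith)
    have hq3 : p + (ω+t) = q + t := by rw [hqdef]; ring
    rw [hq3] at hsplit hdens
    have hfull : mI C.carrier (p-(ω+t)) (p-ω) = (p-ω) - (p-(ω+t)) := by
      apply mI_of_full (by linarith)
      intro x hx
      exact C.Iio_subset (show x < 0 by rcases hx with ⟨-, h⟩; linarith)
    rw [hfull] at hsplit
    nlinarith [hsplit, hblackvol, hdens]
  -- q is not interior to any interval
  have not_interior : ∀ i : Fin C.r, ¬(C.a i < q ∧ q < C.b i) := by
    rintro i ⟨hi1, hi2⟩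
    have ht : (0:ℝ) < C.b i - q := by linarith
    have hfull : mI C.carrier q (q + (C.b i - q)) = C.b i - q := by
      rw [show q + (C.b i - q) = C.b i by ring]
      have h' : mI C.carrier q (C.b i) = C.b i - q := by
        apply mI_of_full (by linarith)
        intro x hx
        exact C.Ioo_subset i ⟨lt_of_le_of_lt hi1.le hx.1, hx.2⟩
      exact h'
    have := sparsity _ ht
    rw [hfull] at this
    nlinarith
  -- some interval starts below q
  have existsA : ∃ i, C.a i < q := by
    by_contra hno
    push_neg at hno
    have hempty : C.carrier ∩ Ioo 0 q = ∅ := by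
      rw [eq_empty_iff_forall_notMem]
      rintro x ⟨hxC, hx0, hxq⟩
      rcases C.mem_carrier.mp hxC with h | ⟨i, hi1, hi2⟩
      · linarith
      · linarith [hno i]
    have hle : mI C.carrier (p-ω) q ≤ (0 - (p-ω)) + 0 := by
      calc mI C.carrier (p-ω) q ≤ mI C.carrier (p-ω) 0 + mI C.carrier 0 q :=
            mI_split_le _ (by linarith) (by linarith)
        _ ≤ (0 - (p-ω)) + 0 :=
            add_le_add (mI_le_length _ (by linarith)) (le_of_eq (mI_of_empty hempty))
    nlinarith
  -- the interval whose right end is 1 starts at or above q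
  obtain ⟨i1, hi1⟩ : ∃ i1, C.b i1 = 1 := hlast.1
  have hqa1 : q ≤ C.a i1 := by
    by_contra hlt
    push_neg at hlt
    exact not_interior i1 ⟨hlt, by rw [hi1]; exact hq1⟩
  -- the maximal index with a i < q
  have Fne : (Finset.univ.filter (fun i => C.a i < q)).Nonempty := by
    obtain ⟨i, hi⟩ := existsA
    exact ⟨i, Finset.mem_filter.mpr ⟨Finset.mem_univ _, hi⟩⟩
  set istar := (Finset.univ.filter (fun i => C.a i < q)).max' Fne with histar
  have histarq : C.a istar < q :=
    (Finset.mem_filter.mp ((Finset.univ.filter (fun i => C.a i < q)).max'_mem Fne)).2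
  have hmax : ∀ i, C.a i < q → i ≤ istar := fun i hi =>
    Finset.le_max' _ i (Finset.mem_filter.mpr ⟨Finset.mem_univ _, hi⟩)
  have hbistar : C.b istar ≤ q := by
    by_contra hgt
    push_neg at hgt
    exact not_interior istar ⟨histarq, hgt⟩
  have histarlt : istar.val + 1 < C.r := by
    have hlt : istar < i1 := by
      by_contra hle
      push_neg at hle
      exact absurd (lt_of_le_of_lt (C.a_mono hle) histarq) (not_lt.mpr hqa1)
    have h1 := i1.isLt
    have h2 : istar.val < i1.val := hlt
    omega
  -- the reduced configuration
  set C' : Config := C.take (istar.val + 1) (Nat.succ_pos _) (le_of_lt histarlt) with hC'def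
  have hAboveq : ∀ i : Fin C.r, ¬ (i.val < istar.val + 1) → q ≤ C.a i := by
    intro i hi
    by_contra hlt
    push_neg at hlt
    exact hi (Nat.lt_succ_of_le (hmax i hlt))
  -- agreement below q
  have agreement : ∀ y z : ℝ, z ≤ q → C'.carrier ∩ Ioo y z = C.carrier ∩ Ioo y z := by
    intro y z hz
    ext x
    simp only [mem_inter_iff, and_congr_left_iff]
    intro hxI
    rw [hC'def, C.mem_take_carrier, C.mem_carrier]
    constructor
    · rintro (hx | ⟨i, -, hi1, hi2⟩)
      · exact Or.inl hx
      · exact Or.inr ⟨i, hi1, hi2⟩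
    · rintro (hx | ⟨i, hi1, hi2⟩)
      · exact Or.inl hx
      · by_cases hii : i.val < istar.val + 1
        · exact Or.inr ⟨i, hii, hi1, hi2⟩
        · exfalso
          have hiq : q ≤ C.a i := hAboveq i hii
          linarith [hxI.2]
  have hsub : C'.carrier ⊆ C.carrier := by
    rw [hC'def]; exact C.take_carrier_subset _ _ _
  -- C' is a counterexample
  have hctr' : IsCounterexample δ C' := by
    intro c hc
    have hcc : c ∈ C.endpoints ∧ 0 ≤ c ∧ c ≤ q := by
      rcases C.take_endpoints _ _ _ (hC'def ▸ hc) with rfl | ⟨i, hin, (rfl | rfl)⟩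
      · exact ⟨mem_insert _ _, le_refl _, hq0.le⟩
      · refine ⟨mem_insert_of_mem _ (Or.inl ⟨i, rfl⟩), (C.ha i).le, ?_⟩
        calc C.a i ≤ C.a istar := C.a_mono (by
              rw [Fin.le_def]; omega)
          _ ≤ q := histarq.le
      · refine ⟨mem_insert_of_mem _ (Or.inr ⟨i, rfl⟩), ((C.ha i).trans (C.hab i)).le, ?_⟩
        calc C.b i ≤ C.b istar := C.b_mono (by
              rw [Fin.le_def]; omega)
          _ ≤ q := hbistar
    obtain ⟨hcC, hc0, hcq⟩ := hcc
    obtain ⟨τ, hτ0, hτ⟩ := hctr c hcC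
    by_cases hwb : relMeasure C.carrier c τ < δ
    · -- white witness survives by monotonicity
      refine ⟨τ, hτ0, fun hIcc => ?_⟩
      have hmono : relMeasure C'.carrier c τ ≤ relMeasure C.carrier c τ := by
        rw [relMeasure_eq, relMeasure_eq]
        exact (div_le_div_iff_of_pos_right (by linarith : (0:ℝ) < 2*τ)).mpr (mI_subset _ _ hsub)
      linarith [hIcc.1]
    · -- black witness
      have hbw : 1 - δ < relMeasure C.carrier c τ := by
        rcases lt_or_ge (1-δ) (relMeasure C.carrier c τ) with h | h
        · exact h
        · exact absurd ⟨not_lt.mp hwb, h⟩ hτ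
      have hvol : (1-δ)*(2*τ) < mI C.carrier (c-τ) (c+τ) := by
        rw [relMeasure_eq, lt_div_iff₀ (by linarith)] at hbw
        linarith
      by_cases hz : c + τ ≤ q
      · -- witness interval stays below q: unchanged
        refine ⟨τ, hτ0, fun hIcc => ?_⟩
        have heq : relMeasure C'.carrier c τ = relMeasure C.carrier c τ := by
          rw [relMeasure_eq, relMeasure_eq, mI_congr (agreement _ _ hz)]
        rw [heq] at hIcc
        linarith [hIcc.2]
      · -- crossing black witness: repair with radius q - c
        push_neg at hz
        have hup1 : mI C.carrier (c-τ) (c+τ) ≤ mI C.carrier (c-τ) q + mI C.carrier q (c+τ) :=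
          mI_split_le _ (by linarith) (by linarith)
        have hs := sparsity (c+τ-q) (by linarith)
        rw [show q + (c+τ-q) = c+τ by ring] at hs
        have hlen : mI C.carrier (c-τ) q ≤ q - (c-τ) := mI_le_length _ (by linarith)
        have hcltq : c < q := by
          by_contra hge
          push_neg at hge
          nlinarith [mul_nonneg hδ0.le (sub_nonneg.mpr hge)]
        set σ := q - c with hσdef
        have hσ : 0 < σ := by rw [hσdef]; linarith
        refine ⟨σ, hσ, fun hIcc => ?_⟩
        have hcσ : c + σ = q := by rw [hσdef]; ring
        have hEq : relMeasure C'.carrier c σ = mI C.carrier (c-σ) q / (2*σ) := by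
          rw [relMeasure_eq, hcσ, mI_congr (agreement _ _ (le_refl q))]
        have hsplit1 : mI C.carrier (c-τ) (c+τ) ≤
            mI C.carrier (c-τ) (c-σ) + mI C.carrier (c-σ) q + mI C.carrier q (c+τ) := by
          have hA : mI C.carrier (c-τ) (c+τ) ≤ mI C.carrier (c-τ) (c-σ) + mI C.carrier (c-σ) (c+τ) :=
            mI_split_le _ (by rw [hσdef]; linarith) (by linarith)
          have hB : mI C.carrier (c-σ) (c+τ) ≤ mI C.carrier (c-σ) q + mI C.carrier q (c+τ) :=
            mI_split_le _ (by rw [hσdef]; linarith) (by linarith)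
          linarith
        have hlen2 : mI C.carrier (c-τ) (c-σ) ≤ (c-σ) - (c-τ) :=
          mI_le_length _ (by rw [hσdef]; linarith)
        have hfinal : (1-δ)*(2*σ) < mI C.carrier (c-σ) q := by nlinarith
        rw [hEq] at hIcc
        have := hIcc.2
        rw [div_le_iff₀ (by linarith)] at this
        nlinarith
  exact hmin C' (by rw [hC'def, C.take_r]; exact histarlt) hctr'

end Black

section White

variable {δ : ℝ} (hδ1 : 1/4 < δ) (hδ2 : δ < 1/2)
variable {C : Config} (hlast : IsGreatest (range C.b) 1)
variable (hctr : IsCounterexample δ C)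
variable (hmin : ∀ C' : Config, C'.r < C.r → ¬ IsCounterexample δ C')

include hδ1 hδ2 hlast hctr hmin in
set_option maxHeartbeats 4000000 in
theorem white_case {p : ℝ} (hW : IsWhite C δ p)
    (h1 : 1 - p ≤ omegaMax C δ p) (h2 : omegaMax C δ p < p) : False := by
  have hδ0 : (0:ℝ) < δ := by linarith
  have hp := hW.1
  obtain ⟨hp0, hp1⟩ := endpoint_mem_Icc hlast hp
  have hb1 : ∀ i, C.b i ≤ 1 := fun i => b_le_one hlast i
  set ω := omegaMax C δ p with hωdef
  have hω0 : 0 < ω := omegaMax_pos hδ1 hδ2 hlast hctr hp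
  set m := p - ω with hmdef
  have hm0 : 0 < m := by rw [hmdef]; linarith
  have hm1 : m < 1 := by rw [hmdef]; linarith
  have hpω1 : 1 ≤ p + ω := by linarith
  have hwhitevol : mI C.carrier m (p+ω) ≤ δ*(2*ω) := by
    have hw := hW.2
    rw [relMeasure_eq, div_le_iff₀ (by linarith)] at hw
    rw [hmdef]
    linarith
  -- nothing above 1
  have hnothing : ∀ x y : ℝ, 1 ≤ x → mI C.carrier x y = 0 := by
    intro x y hx
    apply mI_of_empty
    rw [eq_empty_iff_forall_notMem]
    rintro t ⟨htC, ht1, ht2⟩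
    have := C.carrier_lt_one hb1 htC
    linarith
  -- left density at m
  have leftdensity : ∀ t : ℝ, 0 < t → 2*δ*t < mI C.carrier (m-t) m := by
    intro t ht
    have hdens := (density_of_gt_omegaMax hδ1 hδ2 hlast hp (show ω < ω + t by linarith)).1
    rw [relMeasure_eq, lt_div_iff₀ (by linarith)] at hdens
    have hsp1 : mI C.carrier (p-(ω+t)) (p+(ω+t)) ≤
        mI C.carrier (p-(ω+t)) m + (mI C.carrier m (p+ω) + mI C.carrier (p+ω) (p+(ω+t))) := by
      have hA := mI_split_le C.carrier (show p-(ω+t) ≤ m by rw [hmdef]; linarith)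
        (show m ≤ p+(ω+t) by rw [hmdef]; linarith)
      have hB := mI_split_le C.carrier (show m ≤ p+ω by rw [hmdef]; linarith)
        (show p+ω ≤ p+(ω+t) by linarith)
      linarith
    rw [hnothing (p+ω) (p+(ω+t)) hpω1] at hsp1
    have hmt : p - (ω+t) = m - t := by rw [hmdef]; ring
    rw [hmt] at hsp1 hdens
    nlinarith [hsp1, hwhitevol, hdens]
  -- first interval starts at or below m
  have ha0 : C.a ⟨0, C.hr⟩ ≤ m := by
    by_contra hgt
    push_neg at hgt
    have hempty : C.carrier ∩ Ioo (m - m) m = ∅ := by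
      rw [eq_empty_iff_forall_notMem]
      rintro x ⟨hxC, hx1, hx2⟩
      have h00 : m - m = 0 := by ring
      rcases C.mem_carrier.mp hxC with h | ⟨i, hi1, hi2⟩
      · linarith
      · have : C.a ⟨0, C.hr⟩ ≤ C.a i := C.a_mono (by rw [Fin.le_def]; simp)
        linarith
    have := leftdensity m hm0
    rw [mI_of_empty hempty] at this
    nlinarith
  -- maximal k with a k ≤ m
  have Fne : (Finset.univ.filter (fun i => C.a i ≤ m)).Nonempty :=
    ⟨⟨0, C.hr⟩, Finset.mem_filter.mpr ⟨Finset.mem_univ _, ha0⟩⟩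
  set k := (Finset.univ.filter (fun i => C.a i ≤ m)).max' Fne with hkdef
  have hak : C.a k ≤ m := (Finset.mem_filter.mp (Finset.max'_mem _ Fne)).2
  have hmaxk : ∀ i, C.a i ≤ m → i ≤ k := fun i hi =>
    Finset.le_max' _ i (Finset.mem_filter.mpr ⟨Finset.mem_univ _, hi⟩)
  have hak1m : ∀ i : Fin C.r, k.val < i.val → m < C.a i := by
    intro i hi
    by_contra hle
    push_neg at hle
    have := hmaxk i hle
    rw [Fin.le_def] at this
    omega
  -- b last = 1
  set last : Fin C.r := ⟨C.r - 1, by have := C.hr; omega⟩ with hlastdef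
  have hlv : (last : ℕ) = C.r - 1 := by rw [hlastdef]
  have hblast : C.b last = 1 := by
    obtain ⟨i1, hi1⟩ := hlast.1
    have hle : C.b i1 ≤ C.b last := C.b_mono (by rw [Fin.le_def]; have := i1.isLt; omega)
    have h2' := hb1 last
    rw [hi1] at hle
    linarith
  -- m < a last
  have hmlast : m < C.a last := by
    rcases hp with hp' | ⟨i, hpa⟩ | ⟨i, hpb⟩
    · exfalso
      rw [hp'] at h2
      linarith
    · have : C.a i ≤ C.a last := C.a_mono (by rw [Fin.le_def]; have := i.isLt; omega)
      rw [hmdef]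
      linarith
    · by_cases hil : i.val = C.r - 1
      · have hieq : i = last := Fin.ext (by omega)
        have hp1eq : p = 1 := by rw [← hpb, hieq, hblast]
        by_contra hle
        push_neg at hle
        -- a last ≤ m = 1 - ω
        have hωle : ω ≤ 1 - C.a last := by rw [hmdef] at hle; linarith
        have hfull : mI C.carrier (1-ω) 1 = 1 - (1-ω) := by
          apply mI_of_full (by linarith)
          intro x hx
          apply C.Ioo_subset last
          rw [hblast]
          exact ⟨by rcases hx with ⟨hx1, hx2⟩; linarith, hx.2⟩
        have hsplit := mI_split_ge C.carrier C.carrier_measurable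
          (show (1:ℝ)-ω ≤ 1 by linarith) (show (1:ℝ) ≤ 1+ω by linarith)
        have hwv : mI C.carrier (1-ω) (1+ω) ≤ δ*(2*ω) := by
          have hx := hwhitevol
          rw [hmdef, hp1eq] at hx
          exact hx
        rw [hfull] at hsplit
        nlinarith [mI_nonneg C.carrier 1 (1+ω), hsplit, hwv]
      · have hilt : i < last := by rw [Fin.lt_def]; have := i.isLt; omega
        have := C.hba i last hilt
        rw [hmdef]
        linarith
  have hklast : k.val < C.r - 1 := by
    by_contra hge
    push_neg at hge
    have hkeq : k = last := Fin.ext (by have := k.isLt; omega)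
    rw [hkeq] at hak
    linarith
  have hk : k.val + 1 < C.r := by have := C.hr; omega
  have hmbk : m ≤ C.b k := by
    by_contra hlt
    push_neg at hlt
    have hbk0 : 0 < C.b k := (C.ha k).trans (C.hab k)
    have hempty : C.carrier ∩ Ioo (m - (m - C.b k)) m = ∅ := by
      rw [eq_empty_iff_forall_notMem]
      rintro x ⟨hxC, hx1, hx2⟩
      have hxk : C.b k < x := by linarith [hx1]
      rcases C.mem_carrier.mp hxC with h | ⟨i, hi1, hi2⟩
      · linarith
      · rcases le_or_gt i.val k.val with hc | hc
        · have : C.b i ≤ C.b k := C.b_mono (Fin.le_def.mpr hc)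
          linarith
        · have : m < C.a i := hak1m i hc
          linarith
    have := leftdensity (m - C.b k) (by linarith)
    rw [mI_of_empty hempty] at this
    nlinarith
  -- the reflected configuration
  set D := C.reflTail hb1 hk with hDdef
  set RC : Set ℝ := {x : ℝ | 1 - x ∈ C.carrier} with hRCdef
  have hRCmeas : MeasurableSet RC :=
    C.carrier_measurable.preimage (measurable_const.sub measurable_id)
  have hRCmI : ∀ α β : ℝ, mI RC α β = mI C.carrier (1-β) (1-α) := fun α β =>
    refl_mI C.carrier C.carrier_measurable α β
  have hdisj := C.reflTail_disjoint hb1 hk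
  rw [← hRCdef, ← hDdef] at hdisj
  -- subadditivity
  have K3 : ∀ α β : ℝ, α ≤ β → mI D.carrier α β + mI C.carrier (1-β) (1-α) ≤ β - α := by
    intro α β hαβ
    rw [← hRCmI]
    unfold mI
    rw [← ENNReal.toReal_add (vol_inter_Ioo_ne_top _ _ _) (vol_inter_Ioo_ne_top _ _ _)]
    have hdj : Disjoint (D.carrier ∩ Ioo α β) (RC ∩ Ioo α β) := by
      rw [Set.disjoint_left]
      rintro x ⟨hx1, -⟩ ⟨hx2, -⟩
      exact eq_empty_iff_forall_notMem.mp hdisj x ⟨hx1, hx2⟩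
    rw [← measure_union hdj (hRCmeas.inter measurableSet_Ioo)]
    have hsub : (D.carrier ∩ Ioo α β) ∪ (RC ∩ Ioo α β) ⊆ Ioo α β := by
      rintro x (⟨-, hx⟩ | ⟨-, hx⟩) <;> exact hx
    have := measure_mono (μ := volume) hsub
    rw [Real.volume_Ioo] at this
    calc (volume ((D.carrier ∩ Ioo α β) ∪ (RC ∩ Ioo α β))).toReal
        ≤ (ENNReal.ofReal (β - α)).toReal := ENNReal.toReal_mono (by simp) this
      _ ≤ β - α := by rw [ENNReal.toReal_ofReal (by linarith)]
  -- null set of endpoints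
  set E : Set ℝ := insert 0 ((range fun i => 1 - C.a i) ∪ (range fun i => 1 - C.b i)) with hEdef
  have hEnull : volume E = 0 := by
    have : E.Finite := by
      apply Set.Finite.insert
      exact (Set.finite_range _).union (Set.finite_range _)
    exact this.measure_zero _
  -- exact identity below 1 - m
  have K4 : ∀ α β : ℝ, α < β → β ≤ 1 - m →
      mI D.carrier α β = (β - α) - mI C.carrier (1-β) (1-α) := by
    intro α β hαβ hβm
    have hK3 := K3 α β hαβ.le
    have hcover : Ioo α β ⊆ (D.carrier ∩ Ioo α β) ∪ (RC ∩ Ioo α β) ∪ E := by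
      intro x hx
      by_cases hxD : x ∈ D.carrier
      · exact Or.inl (Or.inl ⟨hxD, hx⟩)
      by_cases hxC : x ∈ RC
      · exact Or.inl (Or.inr ⟨hxC, hx⟩)
      right
      -- w := 1 - x is not in C, and w > m
      have hwm : m < 1 - x := by
        have := hx.2
        linarith
      have hx0 : 0 ≤ x := by
        by_contra hneg
        push_neg at hneg
        exact hxD (D.Iio_subset hneg)
      have hw1 : 1 - x ≤ 1 := by linarith
      rcases eq_or_lt_of_le hw1 with hweq | hwlt
      · -- x = 0
        have : x = 0 := by linarith
        rw [hEdef, this]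
        exact mem_insert _ _
      rcases le_or_gt (1-x) (C.b k) with hwb | hwb
      · -- m < w ≤ b k forces w = b k
        have hwbk : 1 - x = C.b k := by
          rcases eq_or_lt_of_le hwb with h | h
          · exact h
          · exfalso
            apply hxC
            rw [hRCdef]
            exact C.Ioo_subset k ⟨by linarith, h⟩
        rw [hEdef]
        refine mem_insert_of_mem _ (Or.inr ⟨k, ?_⟩)
        show 1 - C.b k = x
        linarith
      · -- b k < w < 1
        have Gne : (Finset.univ.filter (fun l => C.a l < 1 - x)).Nonempty :=
          ⟨k, Finset.mem_filter.mpr ⟨Finset.mem_univ _, by linarith⟩⟩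
        set l := (Finset.univ.filter (fun l => C.a l < 1 - x)).max' Gne with hldef
        have hal : C.a l < 1 - x := (Finset.mem_filter.mp (Finset.max'_mem _ Gne)).2
        have hmaxl : ∀ i, C.a i < 1 - x → i ≤ l := fun i hi =>
          Finset.le_max' _ i (Finset.mem_filter.mpr ⟨Finset.mem_univ _, hi⟩)
        have hwbl : C.b l ≤ 1 - x := by
          by_contra hless
          push_neg at hless
          exact hxC (by rw [hRCdef]; exact C.Ioo_subset l ⟨hal, hless⟩)
        have hlr : l.val < C.r - 1 := by
          by_contra hge
          push_neg at hge
          have hleq : l = last := Fin.ext (by have := l.isLt; omega)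
          rw [hleq, hblast] at hwbl
          linarith
        have hkl : k ≤ l := hmaxl k (by linarith)
        set l1 : Fin C.r := ⟨l.val + 1, by omega⟩ with hl1def
        have hwl1 : 1 - x ≤ C.a l1 := by
          by_contra hless
          push_neg at hless
          have := hmaxl l1 hless
          rw [Fin.le_def] at this
          simp [hl1def] at this
        rcases eq_or_lt_of_le hwbl with hweq | hwgt
        · rw [hEdef]
          refine mem_insert_of_mem _ (Or.inr ⟨l, ?_⟩)
          show 1 - C.b l = x
          linarith
        rcases eq_or_lt_of_le hwl1 with hweq | hwlt1
        · rw [hEdef]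
          refine mem_insert_of_mem _ (Or.inl ⟨l1, ?_⟩)
          show 1 - C.a l1 = x
          linarith
        -- otherwise x is inside a D-interval, contradiction
        exfalso
        apply hxD
        have hkval : k.val ≤ l.val := Fin.le_def.mp hkl
        have hjlt : C.r - 2 - l.val < C.r - 1 - k.val := by omega
        set j : Fin (C.r - 1 - k.val) := ⟨C.r - 2 - l.val, hjlt⟩ with hjdef
        have hidxA : C.idxA hk j = l1 := Fin.ext (by
          rw [C.idxA_val hk j]; simp [hjdef, hl1def]; omega)
        have hidxB : C.idxB hk j = l := Fin.ext (by
          rw [C.idxB_val hk j]; simp [hjdef]; omega)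
        rw [hDdef]
        apply (C.reflTail hb1 hk).Ioo_subset j
        rw [C.reflTail_a hb1 hk j, C.reflTail_b hb1 hk j, hidxA, hidxB]
        exact ⟨by linarith, by linarith⟩
    -- from the cover, the reverse inequality
    have hrev : β - α ≤ mI D.carrier α β + mI C.carrier (1-β) (1-α) := by
      rw [← hRCmI]
      unfold mI
      have hv := measure_mono (μ := volume) hcover
      rw [Real.volume_Ioo] at hv
      have hv2 : volume ((D.carrier ∩ Ioo α β) ∪ (RC ∩ Ioo α β) ∪ E) ≤
          volume (D.carrier ∩ Ioo α β) + volume (RC ∩ Ioo α β) + volume E :=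
        le_trans (measure_union_le _ _) (add_le_add_left (measure_union_le _ _) _)
      rw [hEnull, add_zero] at hv2
      have hfin : volume (D.carrier ∩ Ioo α β) + volume (RC ∩ Ioo α β) ≠ ⊤ :=
        ENNReal.add_ne_top.mpr ⟨vol_inter_Ioo_ne_top _ _ _, vol_inter_Ioo_ne_top _ _ _⟩
      have := ENNReal.toReal_mono hfin (le_trans hv hv2)
      rw [ENNReal.toReal_ofReal (by linarith)] at this
      rwa [ENNReal.toReal_add (vol_inter_Ioo_ne_top _ _ _) (vol_inter_Ioo_ne_top _ _ _)] at this
    linarith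
  -- main step: witness for reflected endpoints
  have key : ∀ c : ℝ, c ∈ C.endpoints → m ≤ c →
      ∃ τ > 0, relMeasure D.carrier (1-c) τ ∉ Icc δ (1-δ) := by
    intro c hcE hmc
    obtain ⟨τ, hτ0, hτ⟩ := hctr c hcE
    by_cases hwb : relMeasure C.carrier c τ < δ
    · -- white witness at c : D gets a black witness
      have hvolw : mI C.carrier (c-τ) (c+τ) < δ*(2*τ) := by
        rw [relMeasure_eq, div_lt_iff₀ (by linarith)] at hwb
        linarith
      by_cases hy : m ≤ c - τ
      · -- same radius, exact identity
        refine ⟨τ, hτ0, fun hIcc => ?_⟩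
        have hid := K4 ((1-c)-τ) ((1-c)+τ) (by linarith) (by linarith)
        rw [show (1:ℝ) - ((1-c)+τ) = c - τ by ring, show (1:ℝ) - ((1-c)-τ) = c + τ by ring] at hid
        have h2τ : ((1-c)+τ) - ((1-c)-τ) = 2*τ := by ring
        rw [h2τ] at hid
        have := hIcc.2
        rw [relMeasure_eq, div_le_iff₀ (by linarith)] at this
        rw [hid] at this
        nlinarith
      · -- crossing: radius c - m
        push_neg at hy
        have hcm : m < c := by
          rcases eq_or_lt_of_le hmc with hceq | h
          · exfalso
            have hld := leftdensity τ hτ0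
            rw [← hceq] at hvolw
            have hmono : mI C.carrier (m-τ) m ≤ mI C.carrier (m-τ) (m+τ) := by
              have := mI_split_ge C.carrier C.carrier_measurable
                (show m-τ ≤ m by linarith) (show m ≤ m+τ by linarith)
              have := mI_nonneg C.carrier m (m+τ)
              linarith [mI_split_ge C.carrier C.carrier_measurable
                (show m-τ ≤ m by linarith) (show m ≤ m+τ by linarith)]
            nlinarith
          · exact h
        set σ := c - m with hσdef
        have hσ0 : 0 < σ := by rw [hσdef]; linarith
        refine ⟨σ, hσ0, fun hIcc => ?_⟩
        have hid := K4 ((1-c)-σ) ((1-c)+σ) (by linarith) (by rw [hσdef]; ring_nf; linarith)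
        rw [show (1:ℝ) - ((1-c)+σ) = c - σ by ring, show (1:ℝ) - ((1-c)-σ) = c + σ by ring] at hid
        have h2σ : ((1-c)+σ) - ((1-c)-σ) = 2*σ := by ring
        rw [h2σ] at hid
        -- c - σ = m, c + σ = 2c - m
        have hcσ1 : c - σ = m := by rw [hσdef]; ring
        have hcσ2 : c + σ = 2*c - m := by rw [hσdef]; ring
        rw [hcσ1, hcσ2] at hid
        -- bound mI C m (2c - m) < 2δσ
        have hsp := mI_split3_ge C.carrier C.carrier_measurable
          (show c-τ ≤ m by linarith) (show m ≤ 2*c-m by linarith)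
          (show 2*c-m ≤ c+τ by linarith)
        have hld := leftdensity (m-(c-τ)) (by linarith)
        rw [show m - (m-(c-τ)) = c - τ by ring] at hld
        have hbound : mI C.carrier m (2*c-m) < 2*δ*σ := by
          have h0 := mI_nonneg C.carrier (2*c-m) (c+τ)
          nlinarith
        have := hIcc.2
        rw [relMeasure_eq, div_le_iff₀ (by linarith)] at this
        rw [hid] at this
        nlinarith
    · -- black witness at c : D gets a white witness by subadditivity
      have hbw : 1 - δ < relMeasure C.carrier c τ := by
        rcases lt_or_ge (1-δ) (relMeasure C.carrier c τ) with h | h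
        · exact h
        · exact absurd ⟨not_lt.mp hwb, h⟩ hτ
      have hvolb : (1-δ)*(2*τ) < mI C.carrier (c-τ) (c+τ) := by
        rw [relMeasure_eq, lt_div_iff₀ (by linarith)] at hbw
        linarith
      refine ⟨τ, hτ0, fun hIcc => ?_⟩
      have hK3 := K3 ((1-c)-τ) ((1-c)+τ) (by linarith)
      rw [show (1:ℝ) - ((1-c)+τ) = c - τ by ring, show (1:ℝ) - ((1-c)-τ) = c + τ by ring] at hK3
      have := hIcc.1
      rw [relMeasure_eq, le_div_iff₀ (by linarith)] at this
      nlinarith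
  -- D is a counterexample
  have hctrD : IsCounterexample δ D := by
    rintro e (rfl | (⟨j, rfl⟩ | ⟨j, rfl⟩))
    · have h := key 1 (mem_insert_of_mem _ (Or.inr ⟨last, hblast⟩)) (by linarith)
      simpa using h
    · have hidx := C.idxA_gt hk j
      have h := key (C.a (C.idxA hk j))
        (mem_insert_of_mem _ (Or.inl ⟨C.idxA hk j, rfl⟩))
        (hak1m _ hidx).le
      exact h
    · have hidx := C.idxB_ge hk j
      have h := key (C.b (C.idxB hk j))
        (mem_insert_of_mem _ (Or.inr ⟨C.idxB hk j, rfl⟩))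
        (by
          have : C.b k ≤ C.b (C.idxB hk j) := C.b_mono (Fin.le_def.mpr hidx)
          linarith)
      exact h
  -- contradiction with minimality
  exact hmin D (by rw [hDdef, C.reflTail_r]; have := C.hr; omega) hctrD

end White


/-- For a minimal counterexample configuration `C` (with largest endpoint `1`):
if `p` is black and `p ≤ 1/2` then `ω(p) < p` or `ω(p) ≥ 1 - p`; and if `p` is white
and `p ≥ 1/2` then `ω(p) < 1 - p` or `ω(p) ≥ p`. -/
theorem black_white_omega_dichotomy
    (δ : ℝ) (hδ1 : 1 / 4 < δ) (hδ2 : δ < 1 / 2)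
    (C : Config) (hlast : IsGreatest (range C.b) 1)
    (hctr : IsCounterexample δ C)
    (hmin : ∀ C' : Config, C'.r < C.r → ¬ IsCounterexample δ C') :
    (∀ p : ℝ, IsBlack C δ p → p ≤ 1 / 2 →
      omegaMax C δ p < p ∨ 1 - p ≤ omegaMax C δ p) ∧
    (∀ p : ℝ, IsWhite C δ p → 1 / 2 ≤ p →
      omegaMax C δ p < 1 - p ∨ p ≤ omegaMax C δ p) := by
  have hδ1' : 1/4 < δ := by linarith
  have hδ2' : δ < 1/2 := by linarith
  constructor
  · intro p hB _
    by_contra hcon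
    push_neg at hcon
    exact black_case hδ1' hδ2' hlast hctr hmin hB hcon.1 hcon.2
  · intro p hW _
    by_contra hcon
    push_neg at hcon
    exact white_case hδ1' hδ2' hlast hctr hmin hW hcon.1 hcon.2
end

section
/- One has (1−ρ)/(2(1−v_B)) ≤ δ and ρ/(2 v_W) ≤ δ. More precisely: for every black endpoint v with v ≤ 1/2 and ω(v) ≥ 1−v one has 1−ρ ≤ 2δ(1−v), and for every white endpoint v with v ≥ 1/2 and ω(v) ≥ v one has ρ ≤ 2δ v. -/
open MeasureTheory Set Filter

lemma vol_ne_top' {s : Set ℝ} {a b : ℝ} (h : s ⊆ Set.Ioo a b) : volume s ≠ ⊤ :=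
  ne_top_of_le_ne_top (by simp [Real.volume_Ioo]) (measure_mono h)

lemma black_bound (δ : ℝ) (hδ2 : δ < 1/2) (K : Set ℝ) (hK : MeasurableSet K)
    (hK1 : K ⊆ Iio 1) (v ω ρ : ℝ) (hv : v ≤ 1/2) (hω : 1 - v ≤ ω)
    (hrel : 1 - δ ≤ (volume (K ∩ Ioo (v-ω) (v+ω))).toReal / (2*ω))
    (hρ : ρ = (volume (K ∩ Ioo (0:ℝ) 1)).toReal) :
    1 - ρ ≤ 2*δ*(1-v) := by
  have hω0 : 0 < ω := by linarith
  set I := Ioo (v-ω) (v+ω) with hIdef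
  have hvolI : (volume I).toReal = 2*ω := by
    rw [hIdef, Real.volume_Ioo, ENNReal.toReal_ofReal (by linarith)]; ring
  have hfinI : volume I ≠ ⊤ := by
    rw [hIdef, Real.volume_Ioo]; exact ENNReal.ofReal_ne_top
  have hfin1 : volume (I ∩ K) ≠ ⊤ :=
    ne_top_of_le_ne_top hfinI (measure_mono inter_subset_left)
  have hfin2 : volume (I \ K) ≠ ⊤ :=
    ne_top_of_le_ne_top hfinI (measure_mono diff_subset)
  have hsum : (volume (I ∩ K)).toReal + (volume (I \ K)).toReal = 2*ω := by
    rw [← ENNReal.toReal_add hfin1 hfin2, measure_inter_add_diff I hK, hvolI]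
  -- from hrel
  have h1 : (1-δ) * (2*ω) ≤ (volume (I ∩ K)).toReal := by
    rw [inter_comm]
    exact (le_div_iff₀ (by positivity)).mp hrel
  have h2 : (volume (I \ K)).toReal ≤ 2*δ*ω := by nlinarith
  -- lower bound on volume (I \ K)
  have hsub1 : Ioo (0:ℝ) 1 \ K ⊆ I \ K :=
    diff_subset_diff_left (Ioo_subset_Ioo (by linarith) (by linarith))
  have hsub2 : Ico (1:ℝ) (v+ω) ⊆ I \ K := by
    intro x hx
    refine ⟨⟨by linarith [hx.1], hx.2⟩, fun hxK => ?_⟩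
    have := hK1 hxK
    simp only [mem_Iio] at this
    linarith [hx.1]
  have hdisj : Disjoint (Ioo (0:ℝ) 1 \ K) (Ico (1:ℝ) (v+ω)) := by
    refine Set.disjoint_left.mpr fun x hx hx' => ?_
    exact absurd hx.1.2 (not_lt.mpr hx'.1)
  have hunion : volume (Ioo (0:ℝ) 1 \ K) + volume (Ico (1:ℝ) (v+ω)) ≤ volume (I \ K) := by
    rw [← measure_union hdisj measurableSet_Ico]
    exact measure_mono (union_subset hsub1 hsub2)
  have hfin3 : volume (Ioo (0:ℝ) 1 \ K) ≠ ⊤ :=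
    ne_top_of_le_ne_top (by simp [Real.volume_Ioo]) (measure_mono diff_subset)
  have hfin4 : volume (Ico (1:ℝ) (v+ω)) ≠ ⊤ := by
    rw [Real.volume_Ico]; exact ENNReal.ofReal_ne_top
  have hunion' : (volume (Ioo (0:ℝ) 1 \ K)).toReal + (v+ω-1) ≤ (volume (I \ K)).toReal := by
    have := ENNReal.toReal_le_toReal (a := volume (Ioo (0:ℝ) 1 \ K) + volume (Ico (1:ℝ) (v+ω)))
      (b := volume (I \ K)) (by exact ENNReal.add_ne_top.mpr ⟨hfin3, hfin4⟩) hfin2 |>.mpr hunion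
    rw [ENNReal.toReal_add hfin3 hfin4, Real.volume_Ico,
      ENNReal.toReal_ofReal (by linarith)] at this
    linarith
  -- 1 - ρ = volume (Ioo 0 1 \ K)
  have hsum01 : (volume (Ioo (0:ℝ) 1 ∩ K)).toReal + (volume (Ioo (0:ℝ) 1 \ K)).toReal = 1 := by
    rw [← ENNReal.toReal_add (ne_top_of_le_ne_top (by simp [Real.volume_Ioo])
        (measure_mono inter_subset_left)) hfin3,
      measure_inter_add_diff _ hK, Real.volume_Ioo]
    norm_num
  rw [inter_comm] at hsum01
  rw [hρ] at *
  nlinarith [hunion', h2, hsum01]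

lemma white_bound (δ : ℝ) (hδ2 : δ < 1/2) (K : Set ℝ) (hK : MeasurableSet K)
    (hK0 : Iio (0:ℝ) ⊆ K) (v ω ρ : ℝ) (hv : 1/2 ≤ v) (hω : v ≤ ω)
    (hrel : (volume (K ∩ Ioo (v-ω) (v+ω))).toReal / (2*ω) ≤ δ)
    (hρ : ρ = (volume (K ∩ Ioo (0:ℝ) 1)).toReal) :
    ρ ≤ 2*δ*v := by
  have hω0 : 0 < ω := by linarith
  set I := Ioo (v-ω) (v+ω) with hIdef
  have hfinI : volume I ≠ ⊤ := by
    rw [hIdef, Real.volume_Ioo]; exact ENNReal.ofReal_ne_top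
  have hfin1 : volume (K ∩ I) ≠ ⊤ :=
    ne_top_of_le_ne_top hfinI (measure_mono inter_subset_right)
  have h1 : (volume (K ∩ I)).toReal ≤ 2*δ*ω := by
    have := (div_le_iff₀ (by positivity : (0:ℝ) < 2*ω)).mp hrel
    linarith [this]
  have hsub1 : K ∩ Ioo (0:ℝ) 1 ⊆ K ∩ I :=
    inter_subset_inter_right K (Ioo_subset_Ioo (by linarith) (by linarith))
  have hsub2 : Ioo (v-ω) (0:ℝ) ⊆ K ∩ I := by
    intro x hx
    exact ⟨hK0 hx.2, hx.1, by linarith [hx.2]⟩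
  have hdisj : Disjoint (K ∩ Ioo (0:ℝ) 1) (Ioo (v-ω) (0:ℝ)) := by
    refine Set.disjoint_left.mpr fun x hx hx' => ?_
    exact absurd hx.2.1 (not_lt.mpr (le_of_lt hx'.2))
  have hunion : volume (K ∩ Ioo (0:ℝ) 1) + volume (Ioo (v-ω) (0:ℝ)) ≤ volume (K ∩ I) := by
    rw [← measure_union hdisj measurableSet_Ioo]
    exact measure_mono (union_subset hsub1 hsub2)
  have hfin3 : volume (K ∩ Ioo (0:ℝ) 1) ≠ ⊤ :=
    ne_top_of_le_ne_top (by simp [Real.volume_Ioo]) (measure_mono inter_subset_right)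
  have hfin4 : volume (Ioo (v-ω) (0:ℝ)) ≠ ⊤ := by
    rw [Real.volume_Ioo]; exact ENNReal.ofReal_ne_top
  have hunion' : ρ + (ω - v) ≤ (volume (K ∩ I)).toReal := by
    have := ENNReal.toReal_le_toReal (a := volume (K ∩ Ioo (0:ℝ) 1) + volume (Ioo (v-ω) (0:ℝ)))
      (b := volume (K ∩ I)) (ENNReal.add_ne_top.mpr ⟨hfin3, hfin4⟩) hfin1 |>.mpr hunion
    rw [ENNReal.toReal_add hfin3 hfin4, Real.volume_Ioo,
      ENNReal.toReal_ofReal (by linarith)] at this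
    rw [hρ]
    linarith
  nlinarith

/-- With `v_B` the largest black endpoint `v ≤ 1/2` with `ω(v) ≥ 1 - v`, `v_W` the smallest
white endpoint `v ≥ 1/2` with `ω(v) ≥ v`, and `ρ = λ(C ∩ (0,1))`: one has
`(1-ρ)/(2(1-v_B)) ≤ δ` and `ρ/(2 v_W) ≤ δ`; more precisely, `1 - ρ ≤ 2δ(1-v)` for every
black endpoint `v ≤ 1/2` with `ω(v) ≥ 1 - v`, and `ρ ≤ 2δv` for every white endpoint
`v ≥ 1/2` with `ω(v) ≥ v`. -/
theorem rho_bounds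
    (δ : ℝ) (hδ1 : 1 / 4 < δ) (hδ2 : δ < 1 / 2)
    (C : Config) (hlast : IsGreatest (range C.b) 1)
    (hctr : IsCounterexample δ C)
    (hmin : ∀ C' : Config, C'.r < C.r → ¬ IsCounterexample δ C')
    (vB vW : ℝ)
    (hvB : IsGreatest {v : ℝ | IsBlack C δ v ∧ v ≤ 1 / 2 ∧ 1 - v ≤ omegaMax C δ v} vB)
    (hvW : IsLeast {v : ℝ | IsWhite C δ v ∧ 1 / 2 ≤ v ∧ v ≤ omegaMax C δ v} vW)
    (ρ : ℝ) (hρ : ρ = (volume (C.carrier ∩ Ioo (0 : ℝ) 1)).toReal) :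
    ((1 - ρ) / (2 * (1 - vB)) ≤ δ ∧ ρ / (2 * vW) ≤ δ) ∧
    (∀ v : ℝ, IsBlack C δ v → v ≤ 1 / 2 → 1 - v ≤ omegaMax C δ v →
      1 - ρ ≤ 2 * δ * (1 - v)) ∧
    (∀ v : ℝ, IsWhite C δ v → 1 / 2 ≤ v → v ≤ omegaMax C δ v →
      ρ ≤ 2 * δ * v) := by
  have hKmeas : MeasurableSet C.carrier :=
    measurableSet_Iio.union (MeasurableSet.iUnion fun i => measurableSet_Ioo)
  have hK1 : C.carrier ⊆ Iio 1 := by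
    rintro x (hx | hx)
    · exact mem_Iio.mpr (lt_trans (mem_Iio.mp hx) (by norm_num))
    · simp only [mem_iUnion, mem_Ioo] at hx
      obtain ⟨i, _, hxb⟩ := hx
      exact lt_of_lt_of_le hxb (hlast.2 ⟨i, rfl⟩)
  have hK0 : Iio (0:ℝ) ⊆ C.carrier := subset_union_left
  have hblack : ∀ v : ℝ, IsBlack C δ v → v ≤ 1 / 2 → 1 - v ≤ omegaMax C δ v →
      1 - ρ ≤ 2 * δ * (1 - v) := by
    intro v hb hv hω
    exact black_bound δ hδ2 C.carrier hKmeas hK1 v (omegaMax C δ v) ρ hv hω hb.2 hρ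
  have hwhite : ∀ v : ℝ, IsWhite C δ v → 1 / 2 ≤ v → v ≤ omegaMax C δ v →
      ρ ≤ 2 * δ * v := by
    intro v hw hv hω
    exact white_bound δ hδ2 C.carrier hKmeas hK0 v (omegaMax C δ v) ρ hv hω hw.2 hρ
  refine ⟨⟨?_, ?_⟩, hblack, hwhite⟩
  · obtain ⟨hb, hv, hω⟩ := hvB.1
    have h := hblack vB hb hv hω
    rw [div_le_iff₀ (by linarith)]
    linarith
  · obtain ⟨hw, hv, hω⟩ := hvW.1
    have h := hwhite vW hw hv hω
    rw [div_le_iff₀ (by linarith)]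
    linarith
end
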